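/- arXiv:0705.1107 — 2 statements merged into one kernel-verified Lean document; each statement's English description precedes it below -/
import Mathlib

section
/- Let V:ℝ³→ℝ be continuously differentiable, nonnegative, homogeneous of degree s>2 and satisfy W(x) = V(x) − r²/4 → ∞ as |x|→∞, where r = √(x₁²+x₂²). Let M be the set of minimizers of W and m = −min_{ℝ³} W ≥ 0. Then M is compact and every point of M has the same radial coordinate r₀ = 2√(s·m/(s−2)). Moreover, for Ω > 0, every minimizer of W_Ω(x) = V(x) − Ω²r²/4 has radial coordinate r_Ω = Ω^{2/(s−2)} r₀. -/
noncomputable section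

open MeasureTheory Filter Topology Real

abbrev E3 := EuclideanSpace ℝ (Fin 3)

/-- distance from the z-axis -/
def radial (x : E3) : ℝ := Real.sqrt ((x 0)^2 + (x 1)^2)

/-- k-th component of the vector potential `A_Ω(x) = (Ω/2)(e_z ∧ x)` -/
def Avec (Ω : ℝ) (x : E3) : Fin 3 → ℝ := ![-(Ω/2) * x 1, (Ω/2) * x 0, 0]

/-- covariant (magnetic) derivative `(∂_k - i A_k) φ` -/
def covD (Ω : ℝ) (φ : E3 → ℂ) (k : Fin 3) : E3 → ℂ := fun x =>
  fderiv ℝ φ x (EuclideanSpace.single k 1) - Complex.I * (Avec Ω x k : ℂ) * φ x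

/-- `|(∇ - iA_Ω)φ|²` -/
def magKin (Ω : ℝ) (φ : E3 → ℂ) (x : E3) : ℝ := ∑ k : Fin 3, ‖covD Ω φ k x‖^2

/-- homogeneity of degree `s`: `V (λ x) = λ^s V x` for `λ > 0` -/
def HomogeneousOfDegree (V : E3 → ℝ) (s : ℝ) : Prop :=
  ∀ l : ℝ, 0 < l → ∀ x : E3, V (l • x) = l ^ s * V x

/-- trapping: `V - Ω² r²/4 → ∞` as `|x| → ∞`, for every `Ω ≥ 0` -/
def IsTrapping (V : E3 → ℝ) : Prop :=
  ∀ Ω : ℝ, 0 ≤ Ω →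
    Tendsto (fun x : E3 => V x - Ω^2 * (radial x)^2 / 4) (cocompact E3) atTop

/-- Thomas-Fermi functional -/
def TFtot (V : E3 → ℝ) (g Ω : ℝ) (ρ : E3 → ℝ) : ℝ :=
  ∫ x : E3, (V x * ρ x - Ω^2 * (radial x)^2 / 4 * ρ x + g * (ρ x)^2)

/-- admissible (normalized) TF densities -/
def TFadm (V : E3 → ℝ) (ρ : E3 → ℝ) : Prop :=
  (∀ x, 0 ≤ ρ x) ∧ MemLp ρ 2 volume ∧
    Integrable (fun x => V x * ρ x) ∧
    Integrable (fun x => (radial x)^2 * ρ x) ∧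
    (∫ x : E3, ρ x) = 1

/-- Thomas-Fermi ground state energy `E^TF_{g,Ω}` -/
def TFenergy (V : E3 → ℝ) (g Ω : ℝ) : ℝ :=
  sInf {e : ℝ | ∃ ρ : E3 → ℝ, TFadm V ρ ∧ TFtot V g Ω ρ = e}

def IsTFMinimizer (V : E3 → ℝ) (g Ω : ℝ) (ρ : E3 → ℝ) : Prop :=
  TFadm V ρ ∧ TFtot V g Ω ρ = TFenergy V g Ω

/-- the `L^∞` (essential supremum) norm -/
def supNorm (ρ : E3 → ℝ) : ℝ := (eLpNorm ρ ⊤ volume).toReal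

/-- Gross-Pitaevskii functional -/
def GPtot (V : E3 → ℝ) (g Ω : ℝ) (φ : E3 → ℂ) : ℝ :=
  ∫ x : E3, (magKin Ω φ x + V x * ‖φ x‖^2 - Ω^2 * (radial x)^2 / 4 * ‖φ x‖^2 + g * ‖φ x‖^4)

/-- admissible (normalized) GP states -/
def GPadm (V : E3 → ℝ) (Ω : ℝ) (φ : E3 → ℂ) : Prop :=
  Differentiable ℝ φ ∧ MemLp φ 4 volume ∧
    Integrable (fun x => V x * ‖φ x‖^2) ∧
    Integrable (fun x => (radial x)^2 * ‖φ x‖^2) ∧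
    Integrable (fun x => magKin Ω φ x) ∧
    (∫ x : E3, ‖φ x‖^2) = 1

/-- Gross-Pitaevskii ground state energy `E^GP_{g,Ω}` -/
def GPenergy (V : E3 → ℝ) (g Ω : ℝ) : ℝ :=
  sInf {e : ℝ | ∃ φ : E3 → ℂ, GPadm V Ω φ ∧ GPtot V g Ω φ = e}

/-- sum of the pair interactions `Σ_{i<j} v(|x_i - x_j|)` -/
def pairSum (v : ℝ → ℝ) {N : ℕ} (X : Fin N → E3) : ℝ :=
  ∑ i : Fin N, ∑ j : Fin N, if i < j then v (dist (X i) (X j)) else 0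

/-- many-body magnetic kinetic energy density `Σ_j |(∇_j - iA_Ω(x_j))Ψ|²` -/
def qmKin (Ω : ℝ) {N : ℕ} (Ψ : (Fin N → E3) → ℂ) (X : Fin N → E3) : ℝ :=
  ∑ j : Fin N, ∑ k : Fin 3,
    ‖fderiv ℝ Ψ X (Pi.single j (EuclideanSpace.single k 1))
      - Complex.I * (Avec Ω (X j) k : ℂ) * Ψ X‖^2

/-- integrand of the many-body quadratic form `⟨Ψ, H_N Ψ⟩` -/
def qmDensity (V : E3 → ℝ) (v : ℝ → ℝ) (Ω : ℝ) {N : ℕ}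
    (Ψ : (Fin N → E3) → ℂ) (X : Fin N → E3) : ℝ :=
  qmKin Ω Ψ X
    + ((∑ j : Fin N, (V (X j) - Ω^2 * (radial (X j))^2 / 4)) + pairSum v X) * ‖Ψ X‖^2

/-- admissible (symmetric, normalized, regular) many-body wave functions -/
def QMadm (N : ℕ) (Ψ : (Fin N → E3) → ℂ) : Prop :=
  (∀ σ : Equiv.Perm (Fin N), ∀ X : Fin N → E3, Ψ (X ∘ σ) = Ψ X) ∧
    Differentiable ℝ Ψ ∧ MemLp Ψ 2 volume ∧
    (∫ X : Fin N → E3, ‖Ψ X‖^2) = 1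

/-- many-body ground state energy `E^QM_{g,Ω}(N)`: infimum of the quadratic form of `H_N`
over normalized symmetric states in the form domain -/
def QMenergy (V : E3 → ℝ) (v : ℝ → ℝ) (Ω : ℝ) (N : ℕ) : ℝ :=
  sInf {e : ℝ | ∃ Ψ : (Fin N → E3) → ℂ, QMadm N Ψ ∧
    Integrable (qmDensity V v Ω Ψ) ∧ (∫ X : Fin N → E3, qmDensity V v Ω Ψ X) = e}

/-- `w` has scattering length `a` -/
def HasScatteringLength (w : ℝ → ℝ) (a : ℝ) : Prop :=
  ∃ u : ℝ → ℝ, u 0 = 0 ∧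
    (∀ r : ℝ, 0 < r → DifferentiableAt ℝ u r) ∧
    (∀ r : ℝ, 0 < r → HasDerivAt (deriv u) (w r * u r / 2) r) ∧
    Tendsto (deriv u) atTop (nhds 1) ∧
    Tendsto (fun r => r - u r) atTop (nhds a)

def HasFiniteRange (w : ℝ → ℝ) : Prop := ∃ R : ℝ, 0 < R ∧ ∀ r : ℝ, R ≤ r → w r = 0

/-- the scaled interaction `v(r) = a⁻² v₁(r/a)` (with scattering length `a`) -/
def scaledInteraction (v₁ : ℝ → ℝ) (a : ℝ) : ℝ → ℝ := fun r => (a^2)⁻¹ * v₁ (r / a)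

/-- normalized one-particle density of a many-body wave function -/
def oneDensity (N : ℕ) (Ψ : (Fin N → E3) → ℂ) (x : E3) : ℝ :=
  ∫ Y : {i : Fin N // i.val ≠ 0} → E3,
    ‖Ψ (fun i => if h : i.val = 0 then x else Y ⟨i, h⟩)‖^2

/-! On each ray `l ↦ l • x` the potential `W = V - r²/4` is `V x · lˢ - r² l²/4`, so at a minimizer
the derivative at `l = 1` vanishes: `s V(x) = r²/2`. This pins `W(x) = -(s-2) r²/(4s)`, i.e.
`r = 2√(s m/(s-2))`. Rescaling `x ↦ Ω^{2/(s-2)} x` turns `W_Ω` into a positive multiple of `W`,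
which transports the statement to `W_Ω`; compactness is the usual coercivity argument. -/

theorem isCompact_setOf_forall_le_of_tendsto_cocompact {β α : Type*} [TopologicalSpace β]
    [LinearOrder α] [TopologicalSpace α] [OrderClosedTopology α] [NoMaxOrder α] {f : β → α}
    (hf : Continuous f) (hlim : Tendsto f (cocompact β) atTop) :
    IsCompact {x | ∀ y, f x ≤ f y} := by
  rcases Set.eq_empty_or_nonempty {x | ∀ y, f x ≤ f y} with hempty | ⟨x₀, hx₀⟩
  · rw [hempty]; exact isCompact_empty
  obtain ⟨K, hK, hfK⟩ := mem_cocompact.mp (hlim.eventually (eventually_gt_atTop (f x₀)))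
  have hclosed : IsClosed {x | ∀ y, f x ≤ f y} := by
    simp only [Set.ofPred_forall]
    exact isClosed_iInter fun y => isClosed_le hf continuous_const
  refine hK.of_isClosed_subset hclosed fun x hx => ?_
  by_contra hxK
  exact (hx x₀).not_gt (hfK hxK)

lemma isLeast_range_of_forall_le {β α : Type*} [Preorder α] {f : β → α} {x : β}
    (hx : ∀ y, f x ≤ f y) : IsLeast (Set.range f) (f x) :=
  ⟨⟨x, rfl⟩, by rintro _ ⟨y, rfl⟩; exact hx y⟩

lemma continuous_radial : Continuous radial := by
  unfold radial; fun_prop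

lemma radial_smul {c : ℝ} (hc : 0 ≤ c) (x : E3) : radial (c • x) = c * radial x := by
  have h0 : (c • x) 0 = c * x 0 := rfl
  have h1 : (c • x) 1 = c * x 1 := rfl
  rw [radial, radial, h0, h1, mul_pow, mul_pow, ← mul_add, Real.sqrt_mul (by positivity),
    Real.sqrt_sq hc]

namespace HomogeneousOfDegree

variable {V : E3 → ℝ} {s : ℝ}

lemma map_zero (hV : HomogeneousOfDegree V s) (hs : s ≠ 0) : V 0 = 0 := by
  have h := hV 2 two_pos 0
  rw [smul_zero] at h
  have h2s : (2 : ℝ) ^ s ≠ 1 := by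
    simpa [Real.rpow_zero] using (Real.rpow_right_inj two_pos (by norm_num) (z := 0)).not.mpr hs
  have h' : ((2 : ℝ) ^ s - 1) * V 0 = 0 := by linarith
  exact (mul_eq_zero.mp h').resolve_left (sub_ne_zero.mpr h2s)

lemma sub_radial_sq_smul (hV : HomogeneousOfDegree V s) {c Ω : ℝ} (hc : 0 < c)
    (hcΩ : Ω ^ 2 * c ^ 2 = c ^ s) (z : E3) :
    V (c • z) - Ω ^ 2 * radial (c • z) ^ 2 / 4 = c ^ s * (V z - radial z ^ 2 / 4) := by
  rw [hV c hc z, radial_smul hc.le z, ← hcΩ]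
  ring

lemma mul_eq_of_forall_le (hV : HomogeneousOfDegree V s) {x : E3}
    (hx : ∀ y, V x - radial x ^ 2 / 4 ≤ V y - radial y ^ 2 / 4) :
    s * V x = radial x ^ 2 / 2 := by
  set r := radial x
  let f : ℝ → ℝ := fun l => V x * l ^ s - r ^ 2 / 4 * l ^ 2
  have hmin : IsLocalMin f 1 := by
    filter_upwards [Ioi_mem_nhds one_pos] with l hl
    have h := hx (l • x)
    rw [hV l hl x, radial_smul hl.le x] at h
    simp only [f, Real.one_rpow]
    nlinarith
  have hderiv := ((Real.hasDerivAt_rpow_const (p := s) (Or.inl one_ne_zero)).const_mul (V x)).sub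
    ((hasDerivAt_pow 2 (1 : ℝ)).const_mul (r ^ 2 / 4))
  have hcrit := IsLocalMin.hasDerivAt_eq_zero (f := f) hmin hderiv
  simp only [Real.one_rpow, one_pow, mul_one, Nat.cast_ofNat] at hcrit
  linarith

lemma radial_eq_of_forall_le (hV : HomogeneousOfDegree V s) (hs : s ≠ 2) {x : E3}
    (hx : ∀ y, V x - radial x ^ 2 / 4 ≤ V y - radial y ^ 2 / 4) :
    radial x = 2 * Real.sqrt (s * -(V x - radial x ^ 2 / 4) / (s - 2)) := by
  have hEuler := hV.mul_eq_of_forall_le hx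
  have hs2 : s - 2 ≠ 0 := sub_ne_zero.mpr hs
  have harg : s * -(V x - radial x ^ 2 / 4) / (s - 2) = (radial x / 2) ^ 2 := by
    field_simp
    linear_combination -16 * hEuler
  rw [harg, Real.sqrt_sq (by unfold radial; positivity)]
  ring

end HomogeneousOfDegree

lemma sq_mul_sq_rpow_two_div_sub_two {Ω s : ℝ} (hΩ : 0 < Ω) (hs : s ≠ 2) :
    Ω ^ 2 * (Ω ^ (2 / (s - 2))) ^ 2 = (Ω ^ (2 / (s - 2))) ^ s := by
  have hs2 : s - 2 ≠ 0 := sub_ne_zero.mpr hs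
  rw [← Real.rpow_natCast Ω 2, ← Real.rpow_natCast _ 2, ← Real.rpow_mul hΩ.le,
    ← Real.rpow_mul hΩ.le, ← Real.rpow_add hΩ]
  congr 1
  push_cast
  field_simp
  ring

theorem minimizing_set_on_cylinder_general
    (V : E3 → ℝ) (s : ℝ)
    (hV_diff : ContDiff ℝ 1 V)
    (hs : 2 < s) (hV_hom : HomogeneousOfDegree V s)
    (hW_trap : Tendsto (fun x : E3 => V x - (radial x)^2/4) (cocompact E3) atTop) :
    IsCompact {x : E3 | ∀ y : E3, V x - (radial x)^2/4 ≤ V y - (radial y)^2/4} ∧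
    0 ≤ -sInf (Set.range fun x : E3 => V x - (radial x)^2/4) ∧
    (∀ x ∈ {x : E3 | ∀ y : E3, V x - (radial x)^2/4 ≤ V y - (radial y)^2/4},
      radial x = 2 * Real.sqrt
        (s * (-sInf (Set.range fun y : E3 => V y - (radial y)^2/4)) / (s - 2))) ∧
    (∀ Ω : ℝ, 0 < Ω → ∀ x : E3,
      (∀ y : E3, V x - Ω^2 * (radial x)^2/4 ≤ V y - Ω^2 * (radial y)^2/4) →
      radial x = Ω ^ ((2 : ℝ) / (s - 2)) *
        (2 * Real.sqrt
          (s * (-sInf (Set.range fun y : E3 => V y - (radial y)^2/4)) / (s - 2)))) := by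
  have hWc : Continuous fun x : E3 => V x - radial x ^ 2 / 4 :=
    hV_diff.continuous.sub ((continuous_radial.pow 2).div_const 4)
  obtain ⟨x₀, hx₀⟩ := hWc.exists_forall_le hW_trap
  have hradial : ∀ x : E3, (∀ y, V x - radial x ^ 2 / 4 ≤ V y - radial y ^ 2 / 4) →
      radial x = 2 * Real.sqrt
        (s * (-sInf (Set.range fun y : E3 => V y - radial y ^ 2 / 4)) / (s - 2)) := by
    intro x hx
    rw [(isLeast_range_of_forall_le hx).csInf_eq]
    exact hV_hom.radial_eq_of_forall_le hs.ne' hx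
  refine ⟨isCompact_setOf_forall_le_of_tendsto_cocompact hWc hW_trap, ?_, hradial, ?_⟩
  · have hW0 : V x₀ - radial x₀ ^ 2 / 4 ≤ 0 := by
      simpa [radial, hV_hom.map_zero (by positivity)] using hx₀ 0
    rw [(isLeast_range_of_forall_le hx₀).csInf_eq]
    linarith
  · intro Ω hΩ x hx
    set c := Ω ^ ((2 : ℝ) / (s - 2))
    have hc : 0 < c := Real.rpow_pos_of_pos hΩ _
    have hscale := hV_hom.sub_radial_sq_smul hc (sq_mul_sq_rpow_two_div_sub_two hΩ hs.ne')
    have hx' : ∀ y, V (c⁻¹ • x) - radial (c⁻¹ • x) ^ 2 / 4 ≤ V y - radial y ^ 2 / 4 := by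
      intro y
      have h := hx (c • y)
      rw [← smul_inv_smul₀ hc.ne' x, hscale, hscale] at h
      exact le_of_mul_le_mul_left h (Real.rpow_pos_of_pos hc s)
    rw [← hradial _ hx', ← radial_smul hc.le, smul_inv_smul₀ hc.ne']

/-- **Lemma 3.1** (`M` is a subset of a cylinder): the set `M` of minimizers of
`W(x) = V(x) - r²/4` is compact, `m = -min W ≥ 0`, every point of `M` has radial
coordinate `r₀ = 2√(s m/(s-2))`, and for `Ω > 0` every minimizer of
`W_Ω(x) = V(x) - Ω² r²/4` has radial coordinate `r_Ω = Ω^{2/(s-2)} r₀`. -/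
theorem minimizing_set_on_cylinder
    (V : E3 → ℝ) (s : ℝ)
    (hV_diff : ContDiff ℝ 1 V) (hV_nonneg : ∀ x, 0 ≤ V x)
    (hs : 2 < s) (hV_hom : HomogeneousOfDegree V s)
    (hW_trap : Tendsto (fun x : E3 => V x - (radial x)^2/4) (cocompact E3) atTop) :
    IsCompact {x : E3 | ∀ y : E3, V x - (radial x)^2/4 ≤ V y - (radial y)^2/4} ∧
    0 ≤ -sInf (Set.range fun x : E3 => V x - (radial x)^2/4) ∧
    (∀ x ∈ {x : E3 | ∀ y : E3, V x - (radial x)^2/4 ≤ V y - (radial y)^2/4},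
      radial x = 2 * Real.sqrt
        (s * (-sInf (Set.range fun y : E3 => V y - (radial y)^2/4)) / (s - 2))) ∧
    (∀ Ω : ℝ, 0 < Ω → ∀ x : E3,
      (∀ y : E3, V x - Ω^2 * (radial x)^2/4 ≤ V y - Ω^2 * (radial y)^2/4) →
      radial x = Ω ^ ((2 : ℝ) / (s - 2)) *
        (2 * Real.sqrt
          (s * (-sInf (Set.range fun y : E3 => V y - (radial y)^2/4)) / (s - 2)))) :=
  minimizing_set_on_cylinder_general V s hV_diff hs hV_hom hW_trap
end
end

section
/- Let V:ℝ³→ℝ be continuous, nonnegative, homogeneous of degree s>2 and satisfy V(x) − Ω²r²/4 → ∞ as |x|→∞ for every Ω≥0. Then the function ω ↦ E^TF_{1,ω} is decreasing on [0,∞), E^TF_{1,0} > 0, the range of ω ↦ E^TF_{1,ω} is (−∞, E^TF_{1,0}] (in particular E^TF_{1,ω} → −∞ as ω → ∞), and there exists ω* > 0 with E^TF_{1,ω*} = 0. -/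
noncomputable section

open MeasureTheory Filter Topology Real

/-! `E^TF_{1,ω}` is an infimum of the functions `ω ↦ a_ρ - ω² b_ρ` with `b_ρ = ∫ r² ρ / 4 ≥ 0`:
it is antitone in `ω ≥ 0` and concave in `u = ω²`, and a concave function of `u ≥ 0` with its
maximum at `u = 0` is continuous there as well. A density supported where `r ≥ 1` has
`b_ρ ≥ 1 / 4`, so the energy tends to `-∞`, and the intermediate value theorem gives every value
below `E^TF_{1,0}`. That value is positive because `V ≥ 1` off a compact set. -/

lemma ConcaveOn.continuousWithinAt_of_isMaxOn {f : ℝ → ℝ} {y : ℝ}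
    (hf : ConcaveOn ℝ (Set.Ici y) f) (hmax : IsMaxOn f (Set.Ici y) y) :
    ContinuousWithinAt f (Set.Ici y) y := by
  have hchord : ∀ x ∈ Set.Icc y (y + 1), f y + (x - y) * (f (y + 1) - f y) ≤ f x := by
    rintro x ⟨hyx, hx1⟩
    have h := hf.2 (Set.mem_Ici.2 le_rfl) (Set.mem_Ici.2 (le_add_of_nonneg_right zero_le_one))
      (sub_nonneg.2 (sub_le_iff_le_add'.2 hx1)) (sub_nonneg.2 hyx) (sub_add_cancel 1 (x - y))
    simp only [smul_eq_mul, show (1 - (x - y)) * y + (x - y) * (y + 1) = x by ring] at h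
    linarith
  have hlower : Tendsto (fun x => f y + (x - y) * (f (y + 1) - f y)) (𝓝[≥] y) (𝓝 (f y)) :=
    ((Continuous.tendsto' (by fun_prop) y (f y) (by simp))).mono_left nhdsWithin_le_nhds
  exact tendsto_of_tendsto_of_tendsto_of_le_of_le' hlower tendsto_const_nhds
    (mem_of_superset (Icc_mem_nhdsGE (lt_add_one y)) hchord) hmax.localize

lemma abs_apply_zero_le_radial (x : E3) : |x 0| ≤ radial x :=
  Real.abs_le_sqrt (le_add_of_nonneg_right (sq_nonneg _))

def uniformDensity (S : Set E3) : E3 → ℝ := S.indicator fun _ => (volume.real S)⁻¹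

section UniformDensity

variable {S : Set E3}

lemma integral_uniformDensity (hS : IsCompact S) (hS0 : volume S ≠ 0) :
    ∫ x, uniformDensity S x = 1 := by
  rw [uniformDensity, integral_indicator_const _ hS.measurableSet, smul_eq_mul,
    mul_inv_cancel₀ (measureReal_ne_zero_iff hS.measure_lt_top.ne |>.2 hS0)]

lemma integrable_mul_uniformDensity (hS : IsCompact S) {f : E3 → ℝ} (hf : Continuous f) :
    Integrable fun x => f x * uniformDensity S x := by
  simp_rw [uniformDensity, ← Set.indicator_mul_right]
  rw [integrable_indicator_iff hS.measurableSet]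
  exact (hf.mul continuous_const).continuousOn.integrableOn_compact hS

lemma tfAdm_uniformDensity {V : E3 → ℝ} (hV : Continuous V) (hS : IsCompact S)
    (hS0 : volume S ≠ 0) : TFadm V (uniformDensity S) :=
  ⟨Set.indicator_nonneg fun _ _ => inv_nonneg.2 measureReal_nonneg,
    memLp_indicator_const 2 hS.measurableSet _ (Or.inr hS.measure_lt_top.ne),
    integrable_mul_uniformDensity hS hV,
    integrable_mul_uniformDensity hS (continuous_radial.pow 2),
    integral_uniformDensity hS hS0⟩

lemma one_le_integral_mul_uniformDensity (hS : IsCompact S) (hS0 : volume S ≠ 0)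
    {f : E3 → ℝ} (hf : Continuous f) (hf1 : ∀ x ∈ S, 1 ≤ f x) :
    1 ≤ ∫ x, f x * uniformDensity S x := by
  rw [← integral_uniformDensity hS hS0]
  refine integral_mono (integrable_mul_uniformDensity hS continuous_const |>.congr
    (ae_of_all _ fun x => one_mul _)) (integrable_mul_uniformDensity hS hf) fun x => ?_
  by_cases hx : x ∈ S
  · simp only [uniformDensity, Set.indicator_of_mem hx]
    exact le_mul_of_one_le_left (inv_nonneg.2 measureReal_nonneg) (hf1 x hx)
  · simp [uniformDensity, hx]

end UniformDensity

def testDensity : E3 → ℝ := uniformDensity (Metric.closedBall (EuclideanSpace.single 0 2) 1)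

lemma tfAdm_testDensity {V : E3 → ℝ} (hV : Continuous V) : TFadm V testDensity :=
  tfAdm_uniformDensity hV (isCompact_closedBall _ _)
    (Metric.measure_closedBall_pos volume _ one_pos).ne'

lemma one_le_integral_radial_sq_mul_testDensity :
    1 ≤ ∫ x, radial x ^ 2 * testDensity x := by
  refine one_le_integral_mul_uniformDensity (isCompact_closedBall _ _)
    (Metric.measure_closedBall_pos volume _ one_pos).ne' (continuous_radial.pow 2) fun x hx => ?_
  have h0 : |x 0 - 2| ≤ 1 := by
    simpa using (PiLp.norm_apply_le (x - EuclideanSpace.single 0 2) 0).trans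
      (mem_closedBall_iff_norm.1 hx)
  have h1 : 1 ≤ radial x := by
    linarith [abs_le.1 h0, le_abs_self (x 0), abs_apply_zero_le_radial x]
  nlinarith

section Energy

variable {V : E3 → ℝ}

lemma TFadm.integrable {ρ : E3 → ℝ} (hρ : TFadm V ρ) : Integrable ρ := by
  by_contra h
  simpa [integral_undef h] using hρ.2.2.2.2

lemma TFadm.integrable_sq {ρ : E3 → ℝ} (hρ : TFadm V ρ) : Integrable fun x => ρ x ^ 2 := by
  simpa using hρ.2.1.integrable_sq

lemma TFadm.tfTot_eq {ρ : E3 → ℝ} (hρ : TFadm V ρ) (ω : ℝ) :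
    TFtot V 1 ω ρ = (∫ x, (V x * ρ x + ρ x ^ 2)) - ω ^ 2 / 4 * ∫ x, radial x ^ 2 * ρ x := by
  have hint : Integrable fun x => V x * ρ x + ρ x ^ 2 := hρ.2.2.1.add hρ.integrable_sq
  rw [← integral_const_mul, ← integral_sub hint (hρ.2.2.2.1.const_mul _), TFtot]
  congr 1 with x
  ring

lemma TFadm.le_tfTot {ρ : E3 → ℝ} (hρ : TFadm V ρ) {ω C : ℝ}
    (hC : ∀ x, C ≤ V x - ω ^ 2 * radial x ^ 2 / 4) : C ≤ TFtot V 1 ω ρ := by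
  have hint : Integrable fun x => V x * ρ x - ω ^ 2 * radial x ^ 2 / 4 * ρ x + 1 * ρ x ^ 2 :=
    ((hρ.2.2.1.sub (hρ.2.2.2.1.const_mul (ω ^ 2 / 4))).add hρ.integrable_sq).congr
      (ae_of_all _ fun x => by simp only [Pi.add_apply, Pi.sub_apply]; ring)
  calc C = ∫ x, C * ρ x := by rw [integral_const_mul, hρ.2.2.2.2, mul_one]
    _ ≤ TFtot V 1 ω ρ := integral_mono (hρ.integrable.const_mul C) hint fun x => by
      nlinarith [hC x, hρ.1 x, sq_nonneg (ρ x)]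

lemma exists_forall_le_tfTot (hV : Continuous V) (hV_trap : IsTrapping V) (ω : ℝ) :
    ∃ C, ∀ ρ, TFadm V ρ → C ≤ TFtot V 1 ω ρ := by
  have hcont : Continuous fun x => V x - |ω| ^ 2 * radial x ^ 2 / 4 := by
    have := continuous_radial; fun_prop
  obtain ⟨x₀, hx₀⟩ := hcont.exists_forall_le (hV_trap |ω| (abs_nonneg ω))
  exact ⟨_, fun ρ hρ => hρ.le_tfTot fun x => by simpa only [sq_abs] using hx₀ x⟩

lemma tfEnergy_le (hV : Continuous V) (hV_trap : IsTrapping V) (ω : ℝ) {ρ : E3 → ℝ}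
    (hρ : TFadm V ρ) : TFenergy V 1 ω ≤ TFtot V 1 ω ρ := by
  obtain ⟨C, hC⟩ := exists_forall_le_tfTot hV hV_trap ω
  exact csInf_le ⟨C, by rintro _ ⟨ρ, hρ, rfl⟩; exact hC ρ hρ⟩ ⟨ρ, hρ, rfl⟩

lemma le_tfEnergy (hV : Continuous V) {ω c : ℝ} (h : ∀ ρ, TFadm V ρ → c ≤ TFtot V 1 ω ρ) :
    c ≤ TFenergy V 1 ω :=
  le_csInf ⟨_, _, tfAdm_testDensity hV, rfl⟩ (by rintro _ ⟨ρ, hρ, rfl⟩; exact h ρ hρ)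

lemma tfEnergy_le_of_sq_le (hV : Continuous V) (hV_trap : IsTrapping V) {ω₁ ω₂ : ℝ}
    (h : ω₁ ^ 2 ≤ ω₂ ^ 2) : TFenergy V 1 ω₂ ≤ TFenergy V 1 ω₁ :=
  le_tfEnergy hV fun ρ hρ => (tfEnergy_le hV hV_trap ω₂ hρ).trans <| by
    have hR : 0 ≤ ∫ x, radial x ^ 2 * ρ x :=
      integral_nonneg fun x => mul_nonneg (sq_nonneg _) (hρ.1 x)
    rw [hρ.tfTot_eq, hρ.tfTot_eq]
    gcongr

lemma concaveOn_tfEnergy_sqrt (hV : Continuous V) (hV_trap : IsTrapping V) :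
    ConcaveOn ℝ (Set.Ici 0) fun u => TFenergy V 1 √u := by
  refine ⟨convex_Ici 0, fun u hu v hv a b ha hb hab => le_tfEnergy hV fun ρ hρ => ?_⟩
  have hsqrt : ∀ w : ℝ, 0 ≤ w → TFtot V 1 √w ρ =
      (∫ x, (V x * ρ x + ρ x ^ 2)) - w / 4 * ∫ x, radial x ^ 2 * ρ x := fun w hw => by
    rw [hρ.tfTot_eq, sq_sqrt hw]
  calc a • TFenergy V 1 √u + b • TFenergy V 1 √v ≤ a • TFtot V 1 √u ρ + b • TFtot V 1 √v ρ := by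
        gcongr <;> exact tfEnergy_le hV hV_trap _ hρ
    _ = TFtot V 1 √(a • u + b • v) ρ := by
        rw [hsqrt u hu, hsqrt v hv, hsqrt _ (convex_Ici 0 hu hv ha hb hab)]
        simp only [smul_eq_mul]
        linear_combination (∫ x, (V x * ρ x + ρ x ^ 2)) * hab

lemma continuous_tfEnergy (hV : Continuous V) (hV_trap : IsTrapping V) :
    Continuous fun ω => TFenergy V 1 ω := by
  have hconc := concaveOn_tfEnergy_sqrt hV hV_trap
  have hmax : IsMaxOn (fun u => TFenergy V 1 √u) (Set.Ici 0) 0 := fun u hu =>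
    tfEnergy_le_of_sq_le hV hV_trap (by simpa [sq_sqrt hu] using hu)
  have hsq : (fun ω => TFenergy V 1 ω) = fun ω => TFenergy V 1 √(ω ^ 2) := by
    ext ω
    rw [sqrt_sq_eq_abs]
    exact le_antisymm (tfEnergy_le_of_sq_le hV hV_trap (sq_abs ω).le)
      (tfEnergy_le_of_sq_le hV hV_trap (sq_abs ω).ge)
  rw [hsq]
  exact (hconc.continuousOn_Ici (hconc.continuousWithinAt_of_isMaxOn hmax)).comp_continuous
    (continuous_pow 2) sq_nonneg

lemma tendsto_tfEnergy_atBot (hV : Continuous V) (hV_trap : IsTrapping V) :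
    Tendsto (fun ω => TFenergy V 1 ω) atTop atBot := by
  set P := ∫ x, (V x * testDensity x + testDensity x ^ 2)
  have hle : ∀ ω, TFenergy V 1 ω ≤ P - ω ^ 2 / 4 := fun ω =>
    (tfEnergy_le hV hV_trap ω (tfAdm_testDensity hV)).trans <| by
      rw [(tfAdm_testDensity hV).tfTot_eq]
      have := one_le_integral_radial_sq_mul_testDensity
      gcongr
      exact le_mul_of_one_le_right (by positivity) this
  refine tendsto_atBot_mono hle (tendsto_atBot_add_const_left _ P ?_)
  exact tendsto_neg_atTop_atBot.comp ((tendsto_pow_atTop two_ne_zero).atTop_div_const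
    (by norm_num))

lemma IsTrapping.exists_isCompact_one_le (hV_trap : IsTrapping V) :
    ∃ K, IsCompact K ∧ ∀ x ∉ K, 1 ≤ V x := by
  have h : Tendsto V (cocompact E3) atTop := by simpa using hV_trap 0 le_rfl
  obtain ⟨K, hK, hKV⟩ := mem_cocompact.1 (h.eventually_ge_atTop 1)
  exact ⟨K, hK, fun x hx => hKV hx⟩

/-- Inside `K` the mass is controlled by `ρ²` via `ρ ≤ ρ² / t + t / 4`, outside `K` by `V ρ`. -/
lemma TFadm.one_le_tfTot_zero_div_add (hV_nonneg : ∀ x, 0 ≤ V x) {K : Set E3}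
    (hK : IsCompact K) (hKV : ∀ x ∉ K, 1 ≤ V x) {ρ : E3 → ℝ} (hρ : TFadm V ρ) {t : ℝ}
    (ht0 : 0 < t) (ht1 : t ≤ 1) : 1 ≤ TFtot V 1 0 ρ / t + t / 4 * volume.real K := by
  have hpt : ∀ x, ρ x ≤ (V x * ρ x + ρ x ^ 2) / t + K.indicator (fun _ => t / 4) x := by
    intro x
    have hVρ := mul_nonneg (hV_nonneg x) (hρ.1 x)
    by_cases hx : x ∈ K
    · rw [Set.indicator_of_mem hx, div_add' _ _ _ ht0.ne', le_div_iff₀ ht0]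
      nlinarith [sq_nonneg (ρ x - t / 2)]
    · rw [Set.indicator_of_notMem hx, add_zero, le_div_iff₀ ht0]
      nlinarith [hKV x hx, hρ.1 x, sq_nonneg (ρ x)]
  have hint : Integrable fun x => (V x * ρ x + ρ x ^ 2) / t :=
    (hρ.2.2.1.add hρ.integrable_sq).div_const t
  have hKint : Integrable (K.indicator fun _ => t / 4) :=
    (integrable_indicator_iff hK.measurableSet).2 (integrableOn_const hK.measure_lt_top.ne)
  calc 1 = ∫ x, ρ x := hρ.2.2.2.2.symm
    _ ≤ ∫ x, ((V x * ρ x + ρ x ^ 2) / t + K.indicator (fun _ => t / 4) x) :=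
      integral_mono hρ.integrable (hint.add hKint) hpt
    _ = TFtot V 1 0 ρ / t + t / 4 * volume.real K := by
      rw [integral_add hint hKint, integral_div, integral_indicator_const _ hK.measurableSet,
        hρ.tfTot_eq, smul_eq_mul]
      ring

lemma tfEnergy_zero_pos (hV : Continuous V) (hV_nonneg : ∀ x, 0 ≤ V x)
    (hV_trap : IsTrapping V) : 0 < TFenergy V 1 0 := by
  obtain ⟨K, hK, hKV⟩ := hV_trap.exists_isCompact_one_le
  set c := volume.real K
  have hc : 0 ≤ c := measureReal_nonneg
  refine lt_of_lt_of_le (by positivity : 0 < 3 / (4 * (c + 1))) (le_tfEnergy hV fun ρ hρ => ?_)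
  have h := hρ.one_le_tfTot_zero_div_add hV_nonneg hK hKV (t := (c + 1)⁻¹) (by positivity)
    (inv_le_one_of_one_le₀ (by linarith))
  have hsmall : (c + 1)⁻¹ * c ≤ 1 := by
    rw [inv_mul_le_iff₀ (by positivity)]
    linarith
  rw [div_inv_eq_mul] at h
  rw [div_le_iff₀ (by positivity)]
  nlinarith

end Energy

theorem tf_energy_monotone_in_omega_general
    (V : E3 → ℝ)
    (hV_cont : Continuous V) (hV_nonneg : ∀ x, 0 ≤ V x)
    (hV_trap : IsTrapping V) :
    (∀ ω₁ ω₂ : ℝ, 0 ≤ ω₁ → ω₁ ≤ ω₂ → TFenergy V 1 ω₂ ≤ TFenergy V 1 ω₁) ∧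
    0 < TFenergy V 1 0 ∧
    (∀ e : ℝ, e ≤ TFenergy V 1 0 → ∃ ω : ℝ, 0 ≤ ω ∧ TFenergy V 1 ω = e) ∧
    Tendsto (fun ω : ℝ => TFenergy V 1 ω) atTop atBot ∧
    (∃ ωstar : ℝ, 0 < ωstar ∧ TFenergy V 1 ωstar = 0) := by
  have hpos := tfEnergy_zero_pos hV_cont hV_nonneg hV_trap
  have hbot := tendsto_tfEnergy_atBot hV_cont hV_trap
  have hrange : ∀ e : ℝ, e ≤ TFenergy V 1 0 → ∃ ω : ℝ, 0 ≤ ω ∧ TFenergy V 1 ω = e :=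
    fun e he => intermediate_value_Ici' (continuous_tfEnergy hV_cont hV_trap).continuousOn hbot he
  refine ⟨fun ω₁ ω₂ h₁ h₁₂ => tfEnergy_le_of_sq_le hV_cont hV_trap (pow_le_pow_left₀ h₁ h₁₂ 2),
    hpos, hrange, hbot, ?_⟩
  obtain ⟨ω, hω, hω0⟩ := hrange 0 hpos.le
  exact ⟨ω, hω.lt_of_ne (by rintro rfl; exact hpos.ne' hω0), hω0⟩

/-- (Properties of `ω ↦ E^TF_{1,ω}`, see Section 2): the map `ω ↦ E^TF_{1,ω}` is
decreasing on `[0,∞)`, `E^TF_{1,0} > 0`, its range is `(-∞, E^TF_{1,0}]`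
(in particular it tends to `-∞` as `ω → ∞`), and there is `ω* > 0` with
`E^TF_{1,ω*} = 0`. -/
theorem tf_energy_monotone_in_omega
    (V : E3 → ℝ) (s : ℝ)
    (hV_cont : Continuous V) (hV_nonneg : ∀ x, 0 ≤ V x)
    (hs : 2 < s) (hV_hom : HomogeneousOfDegree V s) (hV_trap : IsTrapping V) :
    (∀ ω₁ ω₂ : ℝ, 0 ≤ ω₁ → ω₁ ≤ ω₂ → TFenergy V 1 ω₂ ≤ TFenergy V 1 ω₁) ∧
    0 < TFenergy V 1 0 ∧
    (∀ e : ℝ, e ≤ TFenergy V 1 0 → ∃ ω : ℝ, 0 ≤ ω ∧ TFenergy V 1 ω = e) ∧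
    Tendsto (fun ω : ℝ => TFenergy V 1 ω) atTop atBot ∧
    (∃ ωstar : ℝ, 0 < ωstar ∧ TFenergy V 1 ωstar = 0) :=
  tf_energy_monotone_in_omega_general V hV_cont hV_nonneg hV_trap
end
end
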